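/- An integral domain D is a Prüfer v-multiplication domain if and only if D is essential and admits an essential representation {D_p : p ∈ Y} where Y ⊆ Spec(D) is compact (quasi-compact) in the Zariski topology. -/

import Mathlib

open scoped nonZeroDivisors

/-- The localization of `R` at the prime `p`, viewed inside a field `K` to which `R` maps. -/
def locg {R K : Type*} [CommRing R] [Field K] [Algebra R K] (p : PrimeSpectrum R) :
    Subring K where
  carrier := {x : K | ∃ a b : R, b ∉ p.asIdeal ∧ x * algebraMap R K b = algebraMap R K a}
  zero_mem' := ⟨0, 1, fun h => p.2.ne_top ((Ideal.eq_top_iff_one _).2 h), by simp⟩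
  one_mem' := ⟨1, 1, fun h => p.2.ne_top ((Ideal.eq_top_iff_one _).2 h), by simp⟩
  add_mem' := by
    rintro x y ⟨a₁, b₁, hb₁, e₁⟩ ⟨a₂, b₂, hb₂, e₂⟩
    exact ⟨a₁ * b₂ + a₂ * b₁, b₁ * b₂,
      fun h => ((p.2.mem_or_mem h).elim hb₁ hb₂), by
        rw [map_add, map_mul, map_mul, map_mul]
        linear_combination (algebraMap R K b₂) * e₁ + (algebraMap R K b₁) * e₂⟩
  mul_mem' := by
    rintro x y ⟨a₁, b₁, hb₁, e₁⟩ ⟨a₂, b₂, hb₂, e₂⟩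
    exact ⟨a₁ * a₂, b₁ * b₂,
      fun h => ((p.2.mem_or_mem h).elim hb₁ hb₂), by
        rw [map_mul, map_mul, show x * y * (algebraMap R K b₁ * algebraMap R K b₂)
          = (x * algebraMap R K b₁) * (y * algebraMap R K b₂) by ring, e₁, e₂]⟩
  neg_mem' := by
    rintro x ⟨a, b, hb, e⟩
    exact ⟨-a, b, hb, by rw [map_neg, neg_mul, e]⟩
/-- `I` is a `t`-ideal: its `t`-closure is contained in (hence equal to) `I`. -/
def IsTIdeal (R : Type*) [CommRing R] [IsDomain R] (I : Ideal R) : Prop :=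
  ∀ x : R, (∃ J : Ideal R, J.FG ∧ J ≤ I ∧
    algebraMap R (FractionRing R) x ∈
      (1 / (1 / (J : FractionalIdeal R⁰ (FractionRing R))))) → x ∈ I

/-- `M` is a `t`-maximal ideal: maximal among proper `t`-ideals. -/
def IsTMax (R : Type*) [CommRing R] [IsDomain R] (M : Ideal R) : Prop :=
  IsTIdeal R M ∧ M ≠ ⊤ ∧ ∀ I : Ideal R, IsTIdeal R I → I ≠ ⊤ → M ≤ I → I = M
/-- `R` is a Prüfer `v`-multiplication domain: the localization at every `t`-maximal
ideal is a valuation domain. -/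
def IsPvMD (R : Type*) [CommRing R] [IsDomain R] : Prop :=
  ∀ M : Ideal R, IsTMax R M → ∀ hM : M.IsPrime,
    ValuationRing (locg (K := FractionRing R) ⟨M, hM⟩)
/-- The essential prime spectrum: the primes at which the localization is a valuation
domain. -/
def EssSpec (R : Type*) [CommRing R] [IsDomain R] : Set (PrimeSpectrum R) :=
  {p : PrimeSpectrum R | ValuationRing (locg (K := FractionRing R) p)}

/-- `{D_p : p ∈ Y}` is an essential representation of `R`: each localization is a
valuation domain, and their intersection (inside the quotient field) is `R`. -/
def IsEssentialRep (R : Type*) [CommRing R] [IsDomain R] (Y : Set (PrimeSpectrum R)) : Prop :=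
  (∀ p ∈ Y, ValuationRing (locg (K := FractionRing R) p)) ∧
    (⨅ p ∈ Y, locg (K := FractionRing R) p) = (algebraMap R (FractionRing R)).range

/-- `R` is an essential domain. -/
def IsEssential (R : Type*) [CommRing R] [IsDomain R] : Prop :=
  ∃ Y : Set (PrimeSpectrum R), IsEssentialRep R Y

/-!
`t-Max(D)` is always quasi-compact because the `t`-operation has finite type: an ideal `I`
lying in no `t`-maximal ideal has `t`-closure `D`, so `1 ∈ J_v` for some finitely generated
`J ≤ I`, and then `J` already lies in no `t`-maximal ideal. For a PvMD, the localizations at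
the `t`-maximal ideals form an essential representation: for `u` in the quotient field, the
conductor `(D :_D u)` is a `t`-ideal, so unless it is `D` it lies in a `t`-maximal `M`, and
then `u ∉ D_M`.

Conversely, let `{D_p : p ∈ Y}` be an essential representation with `Y` compact. If a
nonzero proper `t`-ideal `I` lay in no `p ∈ Y`, compactness would give a finitely generated
`J ≤ I` lying in no `p ∈ Y`; then `J⁻¹ ⊆ ⋂_{p ∈ Y} D_p = D`, so `J_v = D` and `1 ∈ I`. Hence
every `t`-maximal `M` lies in some `p ∈ Y`, and the overring `D_M ⊇ D_p` is a valuation domain.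
-/

section ValuationSubring

variable {K : Type*} [Field K]

theorem Subring.valuationRing_of_forall_mem_or_inv_mem {A : Subring K}
    (h : ∀ x : K, x ∈ A ∨ x⁻¹ ∈ A) : ValuationRing A :=
  inferInstanceAs (ValuationRing (ValuationSubring.ofSubring A h))

theorem Subring.mem_or_inv_mem_of_valuationRing {R : Type*} [CommRing R] [Nontrivial R]
    [Algebra R K] [IsFractionRing R K] {A : Subring K} [ValuationRing A]
    (hA : (algebraMap R K).range ≤ A) (x : K) : x ∈ A ∨ x⁻¹ ∈ A := by
  obtain ⟨⟨a, s⟩, hx⟩ := IsLocalization.surj R⁰ x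
  have hs : algebraMap R K s ≠ 0 :=
    IsFractionRing.to_map_ne_zero_of_mem_nonZeroDivisors s.2
  obtain ⟨c, hc | hc⟩ := ValuationRing.cond (⟨_, hA ⟨a, rfl⟩⟩ : A) ⟨_, hA ⟨s, rfl⟩⟩
  · have hc : algebraMap R K a * c = algebraMap R K s := congrArg Subtype.val hc
    right
    convert c.2
    rw [← hx, mul_comm x, mul_assoc] at hc
    exact inv_eq_of_mul_eq_one_right (mul_left_cancel₀ hs (by rw [hc, mul_one]))
  · have hc : algebraMap R K s * c = algebraMap R K a := congrArg Subtype.val hc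
    left
    convert c.2
    exact mul_left_cancel₀ hs (by rw [hc, ← hx, mul_comm])

theorem Subring.valuationRing_of_le {R : Type*} [CommRing R] [Nontrivial R] [Algebra R K]
    [IsFractionRing R K] {A B : Subring K} [ValuationRing A]
    (hA : (algebraMap R K).range ≤ A) (hAB : A ≤ B) : ValuationRing B :=
  valuationRing_of_forall_mem_or_inv_mem fun x =>
    (mem_or_inv_mem_of_valuationRing hA x).imp (@hAB x) (@hAB _)

end ValuationSubring

section Locg

variable {R K : Type*} [CommRing R] [Field K] [Algebra R K]

theorem range_le_locg (p : PrimeSpectrum R) : (algebraMap R K).range ≤ locg p := by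
  rintro _ ⟨r, rfl⟩
  exact ⟨r, 1, p.asIdeal.ne_top_iff_one.mp p.2.ne_top, by simp⟩

theorem locg_antitone {p q : PrimeSpectrum R} (h : p ≤ q) : locg (K := K) q ≤ locg p :=
  fun _ ⟨a, b, hb, e⟩ => ⟨a, b, fun hbp => hb (h hbp), e⟩

theorem locg_eq_top_of_asIdeal_eq_bot [Nontrivial R] [IsFractionRing R K] {p : PrimeSpectrum R}
    (hp : p.asIdeal = ⊥) : locg (K := K) p = ⊤ := by
  refine eq_top_iff.mpr fun x _ => ?_
  obtain ⟨⟨a, s⟩, hx⟩ := IsLocalization.surj R⁰ x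
  exact ⟨a, s, by simp [hp], hx⟩

end Locg

/- Mathlib defines `I⁻¹ := 1 / I`, so `I⁻¹⁻¹` is the divisorial closure `I_v` used in
`IsTIdeal`; at `I = 0` it takes the junk value `0`. -/

namespace FractionalIdeal

variable {R K : Type*} [CommRing R] [IsDomain R] [Field K] [Algebra R K] [IsFractionRing R K]
  {I J : FractionalIdeal R⁰ K}

theorem inv_ne_zero_of_ne_zero (hI : I ≠ 0) : I⁻¹ ≠ 0 := fun h => by
  have := den_mem_inv hI
  rw [h, mem_zero_iff] at this
  exact IsFractionRing.to_map_ne_zero_of_mem_nonZeroDivisors I.den.2 this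

theorem le_inv_inv (I : FractionalIdeal R⁰ K) : I ≤ I⁻¹⁻¹ := by
  rcases eq_or_ne I 0 with rfl | hI
  · exact zero_le _
  rw [inv_eq (I := I⁻¹), le_div_iff_mul_le (inv_ne_zero_of_ne_zero hI)]
  exact mul_one_div_le_one

theorem inv_inv_mono (h : I ≤ J) : I⁻¹⁻¹ ≤ J⁻¹⁻¹ := by
  rcases eq_or_ne I 0 with rfl | hI
  · simp [inv_zero']
  have hJ : J ≠ 0 := ne_bot_of_le_ne_bot hI h
  exact inv_anti_mono (inv_ne_zero_of_ne_zero hJ) (inv_ne_zero_of_ne_zero hI)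
    (inv_anti_mono hI hJ h)

theorem inv_inv_inv (I : FractionalIdeal R⁰ K) : I⁻¹⁻¹⁻¹ = I⁻¹ := by
  rcases eq_or_ne I 0 with rfl | hI
  · simp [inv_zero']
  exact le_antisymm (inv_anti_mono hI (ne_bot_of_le_ne_bot hI (le_inv_inv I)) (le_inv_inv I))
    (le_inv_inv I⁻¹)

theorem inv_inv_le_of_le_inv_inv (h : I ≤ J⁻¹⁻¹) : I⁻¹⁻¹ ≤ J⁻¹⁻¹ :=
  (inv_inv_mono h).trans_eq (by rw [inv_inv_inv])

theorem one_le_inv_of_le_one (hI : I ≠ 0) (h : I ≤ 1) : 1 ≤ I⁻¹ := by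
  rw [inv_eq, le_div_iff_mul_le hI, one_mul]
  exact h

theorem inv_inv_le_one (h : I ≤ 1) : I⁻¹⁻¹ ≤ 1 := by
  rcases eq_or_ne I 0 with rfl | hI
  · simp [inv_zero']
  calc I⁻¹⁻¹ ≤ 1⁻¹ := inv_anti_mono one_ne_zero (inv_ne_zero_of_ne_zero hI)
          (one_le_inv_of_le_one hI h)
    _ = 1 := by rw [inv_eq, div_one]

theorem spanSingleton_mul_inv_inv_le (y : K) (I : FractionalIdeal R⁰ K) :
    spanSingleton R⁰ y * I⁻¹⁻¹ ≤ (spanSingleton R⁰ y * I)⁻¹⁻¹ := by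
  rcases eq_or_ne y 0 with rfl | hy
  · simp
  rcases eq_or_ne I 0 with rfl | hI
  · simp [inv_zero']
  have hyI : spanSingleton R⁰ y * I ≠ 0 := fun h => hI <| by
    rw [← one_mul I, ← spanSingleton_inv_mul K hy, mul_assoc, h, mul_zero]
  have hle : spanSingleton R⁰ y * (spanSingleton R⁰ y * I)⁻¹ ≤ I⁻¹ := by
    rw [inv_eq (I := I), le_div_iff_mul_le hI, mul_right_comm]
    exact mul_one_div_le_one
  rw [inv_eq (I := (spanSingleton R⁰ y * I)⁻¹), le_div_iff_mul_le (inv_ne_zero_of_ne_zero hyI)]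
  calc spanSingleton R⁰ y * I⁻¹⁻¹ * (spanSingleton R⁰ y * I)⁻¹
        = I⁻¹⁻¹ * (spanSingleton R⁰ y * (spanSingleton R⁰ y * I)⁻¹) := by ring
    _ ≤ I⁻¹⁻¹ * I⁻¹ := by gcongr
    _ ≤ 1 := by rw [mul_comm]; exact mul_one_div_le_one

end FractionalIdeal

theorem PrimeSpectrum.isCompact_iff_forall_exists_fg {R : Type*} [CommSemiring R]
    {Y : Set (PrimeSpectrum R)} :
    IsCompact Y ↔ ∀ I : Ideal R, (∀ p ∈ Y, ¬I ≤ p.asIdeal) →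
      ∃ J ≤ I, J.FG ∧ ∀ p ∈ Y, ¬J ≤ p.asIdeal := by
  constructor
  · intro hY I hI
    have hcov : Y ⊆ ⋃ f ∈ (I : Set R), (basicOpen f : Set (PrimeSpectrum R)) := fun p hp => by
      obtain ⟨f, hfI, hfp⟩ := SetLike.not_le_iff_exists.mp (hI p hp)
      exact Set.mem_biUnion hfI hfp
    obtain ⟨s, hsI, hs, hYs⟩ :=
      hY.elim_finite_subcover_image (fun f _ => (basicOpen f).isOpen) hcov
    refine ⟨Ideal.span s, Ideal.span_le.mpr hsI, Submodule.fg_span hs, fun p hp hsp => ?_⟩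
    obtain ⟨f, hfs, hfp⟩ := Set.mem_iUnion₂.mp (hYs hp)
    exact hfp (hsp (Ideal.subset_span hfs))
  · intro h
    refine isCompact_of_finite_subcover fun {ι} U hU hYU => ?_
    let f : {x : ι × R // (basicOpen x.2 : Set (PrimeSpectrum R)) ⊆ U x.1} → Ideal R :=
      fun x => Ideal.span {x.1.2}
    obtain ⟨J, hJ, hJfg, hJY⟩ := h (⨆ x, f x) fun p hp hle => by
      obtain ⟨i, hpi⟩ := Set.mem_iUnion.mp (hYU hp)
      obtain ⟨_, ⟨g, rfl⟩, hpg, hgU⟩ :=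
        isTopologicalBasis_basic_opens.exists_subset_of_mem_open hpi (hU i)
      exact hpg (hle (le_iSup f ⟨(i, g), hgU⟩ (Ideal.mem_span_singleton_self g)))
    obtain ⟨s, hs⟩ := CompleteLattice.IsCompactElement.exists_finset_of_le_iSup _
      ((Submodule.fg_iff_compact J).mp hJfg) f hJ
    classical
    refine ⟨s.image (·.1.1), fun p hp => ?_⟩
    have : ¬(⨆ x ∈ s, f x) ≤ p.asIdeal := fun hle => hJY p hp (hs.trans hle)
    simp only [iSup₂_le_iff, not_forall, f, Ideal.span_singleton_le_iff_mem] at this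
    obtain ⟨x, hx, hxp⟩ := this
    exact Set.mem_iUnion₂.mpr ⟨x.1.1, Finset.mem_image_of_mem _ hx, x.2 hxp⟩

section TIdeal

variable {R : Type*} [CommRing R]

open FractionalIdeal

theorem mem_colon_algebraMap_iff {I : Ideal R} {a r : R} :
    r ∈ ((I : FractionalIdeal R⁰ (FractionRing R)) : Submodule R (FractionRing R)).colon
      {algebraMap R _ a} ↔ r * a ∈ I := by
  rw [Submodule.mem_colon_singleton, Algebra.smul_def, ← map_mul]
  refine ⟨fun h => ?_, mem_coeIdeal_of_mem _⟩
  obtain ⟨y, hy, e⟩ := (mem_coeIdeal R⁰).mp h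
  rwa [← IsFractionRing.injective R (FractionRing R) e]

variable [IsDomain R]

local notation "FI" => FractionalIdeal R⁰ (FractionRing R)

theorem isTIdeal_top : IsTIdeal R ⊤ := fun _ _ => Submodule.mem_top

theorem IsTIdeal.colon {I : Ideal R} (hI : IsTIdeal R I) (u : FractionRing R) :
    IsTIdeal R (((I : FI) : Submodule R (FractionRing R)).colon {u}) := by
  rintro x ⟨J, hJfg, hJle, hx⟩
  -- `u • J` is a finitely generated ideal `N ≤ I`, and `u • J_v ⊆ N_v ⊆ R`
  have huJ : spanSingleton R⁰ u * (J : FI) ≤ I := by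
    intro y hy
    obtain ⟨_, hy', rfl⟩ := mem_singleton_mul.mp hy
    obtain ⟨j, hj, rfl⟩ := (mem_coeIdeal R⁰).mp hy'
    simpa [Algebra.smul_def, mul_comm] using Submodule.mem_colon_singleton.mp (hJle hj)
  obtain ⟨N, hN⟩ := le_one_iff_exists_coeIdeal.mp (huJ.trans coeIdeal_le_one)
  have hinj := IsFractionRing.injective R (FractionRing R)
  have hNfg : N.FG := by
    rw [← coeIdeal_fg R⁰ hinj, hN, coe_mul, coe_spanSingleton]
    exact (Submodule.fg_span_singleton u).mul ((coeIdeal_fg R⁰ hinj J).mpr hJfg)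
  have hux : u * algebraMap R _ x ∈ (N : FI)⁻¹⁻¹ :=
    hN ▸ spanSingleton_mul_inv_inv_le u (J : FI) (mem_singleton_mul.mpr ⟨_, hx, rfl⟩)
  obtain ⟨r, hr⟩ := (mem_one_iff _).mp (inv_inv_le_one coeIdeal_le_one hux)
  rw [Submodule.mem_colon_singleton, Algebra.smul_def, mul_comm, ← hr]
  exact mem_coeIdeal_of_mem _ <|
    hI r ⟨N, hNfg, (coeIdeal_le_coeIdeal _).mp (hN ▸ huJ), hr ▸ hux⟩

theorem IsTMax.isPrime {M : Ideal R} (hM : IsTMax R M) : M.IsPrime := by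
  refine ⟨hM.2.1, fun {a b} hab => or_iff_not_imp_left.mpr fun ha => ?_⟩
  set C := ((M : FI) : Submodule R (FractionRing R)).colon {algebraMap R _ a}
  have hMC : M ≤ C := fun r hr => mem_colon_algebraMap_iff.mpr (M.mul_mem_right a hr)
  have hCtop : C ≠ ⊤ := fun h => ha <| by
    simpa using mem_colon_algebraMap_iff.mp (h ▸ Submodule.mem_top : (1 : R) ∈ C)
  rw [← hM.2.2 C (hM.1.colon _) hCtop hMC]
  exact mem_colon_algebraMap_iff.mpr (by rwa [mul_comm])

theorem isTIdeal_sSup {c : Set (Ideal R)} (hc : IsChain (· ≤ ·) c) (hne : c.Nonempty)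
    (ht : ∀ I ∈ c, IsTIdeal R I) : IsTIdeal R (sSup c) := by
  rintro x ⟨J, hJfg, hJle, hx⟩
  obtain ⟨I, hI, hJI⟩ := (CompleteLattice.isCompactElement_iff_le_of_directed_sSup_le _ J).mp
    ((Submodule.fg_iff_compact J).mp hJfg) c hne hc.directedOn hJle
  exact le_sSup hI (ht I hI x ⟨J, hJfg, hJI, hx⟩)

theorem exists_isTMax_le {I : Ideal R} (hI : IsTIdeal R I) (hItop : I ≠ ⊤) :
    ∃ M, IsTMax R M ∧ I ≤ M := by
  set S := {J : Ideal R | IsTIdeal R J ∧ J ≠ ⊤}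
  have hchain : ∀ c ⊆ S, IsChain (· ≤ ·) c → ∀ J ∈ c, ∃ ub ∈ S, ∀ K ∈ c, K ≤ ub :=
    fun c hcS hc J hJ => ⟨sSup c, ⟨isTIdeal_sSup hc ⟨J, hJ⟩ fun K hK => (hcS hK).1,
      (CompleteLattice.IsCompactElement.directed_sSup_lt_of_lt Ideal.isCompactElement_top
        ⟨J, hJ⟩ hc.directedOn fun K hK => lt_top_iff_ne_top.mpr (hcS hK).2).ne⟩,
      fun _ => le_sSup⟩
  obtain ⟨M, hIM, hM, hmax⟩ := zorn_le_nonempty₀ S hchain I ⟨hI, hItop⟩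
  exact ⟨M, ⟨hM.1, hM.2, fun J hJ hJtop hMJ => (hmax ⟨hJ, hJtop⟩ hMJ).antisymm hMJ⟩, hIM⟩

theorem iInf_locg_setOf_isTMax :
    (⨅ p ∈ {q : PrimeSpectrum R | IsTMax R q.asIdeal}, locg (K := FractionRing R) p) =
      (algebraMap R (FractionRing R)).range := by
  refine le_antisymm (fun u hu => ?_) (le_iInf₂ fun p _ => range_le_locg p)
  set C := (((⊤ : Ideal R) : FI) : Submodule R (FractionRing R)).colon {u}
  have hC : ∀ r, r ∈ C ↔ r • u ∈ (1 : FI) := fun r => by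
    rw [Submodule.mem_colon_singleton, coeIdeal_top]; rfl
  by_contra hu'
  have hCtop : C ≠ ⊤ := fun h => hu' <| by
    simpa using (mem_one_iff _).mp ((hC 1).mp (h ▸ Submodule.mem_top))
  obtain ⟨M, hM, hCM⟩ := exists_isTMax_le (isTIdeal_top.colon u) hCtop
  obtain ⟨a, b, hb, hab⟩ := Subring.mem_iInf.mp (Subring.mem_iInf.mp hu ⟨M, hM.isPrime⟩) hM
  exact hb (hCM ((hC b).mpr (by rw [Algebra.smul_def, mul_comm, hab]; exact coe_mem_one _ a)))

def tClosure (I : Ideal R) : Ideal R where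
  carrier := {x | ∃ J : Ideal R, J.FG ∧ J ≤ I ∧
    algebraMap R (FractionRing R) x ∈ (J : FI)⁻¹⁻¹}
  zero_mem' := ⟨⊥, Submodule.fg_bot, bot_le, by rw [map_zero]; exact Submodule.zero_mem _⟩
  add_mem' := by
    rintro x y ⟨J₁, hJ₁, hJ₁I, hx⟩ ⟨J₂, hJ₂, hJ₂I, hy⟩
    refine ⟨J₁ ⊔ J₂, Submodule.FG.sup hJ₁ hJ₂, sup_le hJ₁I hJ₂I, ?_⟩
    rw [map_add]
    exact Submodule.add_mem _ (inv_inv_mono (by gcongr; exact le_sup_left) hx)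
      (inv_inv_mono (by gcongr; exact le_sup_right) hy)
  smul_mem' := by
    rintro c x ⟨J, hJ, hJI, hx⟩
    refine ⟨J, hJ, hJI, ?_⟩
    rw [smul_eq_mul, map_mul, ← Algebra.smul_def]
    exact Submodule.smul_mem _ c hx

theorem le_tClosure (I : Ideal R) : I ≤ tClosure I := fun x hx =>
  ⟨Ideal.span {x}, Submodule.fg_span_singleton x, Ideal.span_le.mpr (by simpa using hx),
    le_inv_inv _ (mem_coeIdeal_of_mem _ (Ideal.mem_span_singleton_self x))⟩

theorem exists_fg_forall_mem_inv_inv_of_subset_tClosure {I : Ideal R} (T : Finset R)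
    (hT : ↑T ⊆ (tClosure I : Set R)) :
    ∃ W : Ideal R, W.FG ∧ W ≤ I ∧ ∀ t ∈ T, algebraMap R (FractionRing R) t ∈ (W : FI)⁻¹⁻¹ := by
  classical
  induction T using Finset.induction_on with
  | empty => exact ⟨⊥, Submodule.fg_bot, bot_le, by simp⟩
  | insert a T _ ih =>
    rw [Finset.coe_insert, Set.insert_subset_iff] at hT
    obtain ⟨J, hJ, hJI, ha⟩ := hT.1
    obtain ⟨W, hW, hWI, hTW⟩ := ih hT.2
    refine ⟨J ⊔ W, Submodule.FG.sup hJ hW, sup_le hJI hWI,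
      (Finset.forall_mem_insert _ _ _).mpr ⟨inv_inv_mono (by gcongr; exact le_sup_left) ha,
        fun t ht => inv_inv_mono (by gcongr; exact le_sup_right) (hTW t ht)⟩⟩

theorem isTIdeal_tClosure (I : Ideal R) : IsTIdeal R (tClosure I) := by
  rintro x ⟨_, ⟨T, rfl⟩, hTI, hx⟩
  obtain ⟨W, hW, hWI, hTW⟩ :=
    exists_fg_forall_mem_inv_inv_of_subset_tClosure T (Ideal.span_le.mp hTI)
  have hspan : ((Ideal.span T : Ideal R) : FI) ≤ (W : FI)⁻¹⁻¹ := fun y hy => by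
    obtain ⟨j, hj, rfl⟩ := (mem_coeIdeal R⁰).mp hy
    exact (Ideal.span_le (I := Submodule.comap (Algebra.linearMap R _) _)).mpr hTW hj
  exact ⟨W, hW, hWI, inv_inv_le_of_le_inv_inv hspan hx⟩

theorem isCompact_setOf_isTMax : IsCompact {q : PrimeSpectrum R | IsTMax R q.asIdeal} := by
  refine PrimeSpectrum.isCompact_iff_forall_exists_fg.mpr fun I hI => ?_
  have h1 : (1 : R) ∈ tClosure I := by
    by_contra h1
    obtain ⟨M, hM, hIM⟩ :=
      exists_isTMax_le (isTIdeal_tClosure I) fun h => h1 (h ▸ Submodule.mem_top)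
    exact hI ⟨M, hM.isPrime⟩ hM ((le_tClosure I).trans hIM)
  obtain ⟨J, hJfg, hJI, hJ1⟩ := h1
  exact ⟨J, hJI, hJfg, fun q hq hJq =>
    hq.2.1 ((Ideal.eq_top_iff_one _).mpr (hq.1 1 ⟨J, hJfg, hJq, hJ1⟩))⟩

theorem inv_eq_one_of_forall_not_le {Y : Set (PrimeSpectrum R)}
    (hY : ⨅ p ∈ Y, locg p ≤ (algebraMap R (FractionRing R)).range) {J : Ideal R} (hJ : J ≠ ⊥)
    (hJY : ∀ p ∈ Y, ¬J ≤ p.asIdeal) : (J : FI)⁻¹ = 1 := by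
  have hJ0 : (J : FI) ≠ 0 := coeIdeal_ne_zero.mpr hJ
  refine le_antisymm (fun z hz => ?_) (one_le_inv_of_le_one hJ0 coeIdeal_le_one)
  have hzY : z ∈ ⨅ p ∈ Y, locg p := by
    refine Subring.mem_iInf.mpr fun p => Subring.mem_iInf.mpr fun hp => ?_
    obtain ⟨f, hfJ, hfp⟩ := SetLike.not_le_iff_exists.mp (hJY p hp)
    obtain ⟨c, hc⟩ := (mem_one_iff _).mp ((mem_inv_iff hJ0).mp hz _ (mem_coeIdeal_of_mem _ hfJ))
    exact ⟨c, f, hfp, hc.symm⟩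
  obtain ⟨r, rfl⟩ := hY hzY
  exact coe_mem_one _ r

theorem exists_mem_le_of_isTIdeal {Y : Set (PrimeSpectrum R)}
    (hY : ⨅ p ∈ Y, locg p ≤ (algebraMap R (FractionRing R)).range) (hYc : IsCompact Y)
    {I : Ideal R} (hI : IsTIdeal R I) (hItop : I ≠ ⊤) (hIbot : I ≠ ⊥) :
    ∃ p ∈ Y, I ≤ p.asIdeal := by
  by_contra! hIY
  obtain ⟨J, hJI, hJfg, hJY⟩ := PrimeSpectrum.isCompact_iff_forall_exists_fg.mp hYc I hIY
  obtain ⟨m, hmI, hm⟩ := Submodule.exists_mem_ne_zero_of_ne_bot hIbot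
  -- adjoining `m` keeps `J` away from `0`, whose closure is the junk value `0⁻¹⁻¹ = 0`
  set J' := J ⊔ Ideal.span {m}
  have hJ'I : J' ≤ I := sup_le hJI ((Ideal.span_singleton_le_iff_mem I).mpr hmI)
  have hJ'fg : J'.FG := Submodule.FG.sup hJfg (Submodule.fg_span_singleton m)
  have hJ'bot : J' ≠ ⊥ := fun h =>
    hm ((Submodule.eq_bot_iff _).mp h m (Ideal.mem_sup_right (Ideal.mem_span_singleton_self m)))
  have hJ'v : (J' : FI)⁻¹⁻¹ = 1 := by
    rw [inv_eq_one_of_forall_not_le hY hJ'bot fun p hp hle => hJY p hp (le_sup_left.trans hle),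
      inv_eq, FractionalIdeal.div_one]
  have h1v : (1 : FractionRing R) ∈ (J' : FI)⁻¹⁻¹ := by rw [hJ'v]; exact one_mem_one _
  have h1 : (1 : R) ∈ I := hI 1 ⟨J', hJ'fg, hJ'I, by rwa [map_one]⟩
  exact hItop ((Ideal.eq_top_iff_one I).mpr h1)

theorem isPvMD_of_isEssentialRep_of_isCompact {Y : Set (PrimeSpectrum R)}
    (hY : IsEssentialRep R Y) (hYc : IsCompact Y) : IsPvMD R := by
  intro M hM hMp
  rcases eq_or_ne M ⊥ with rfl | hMbot
  · refine Subring.valuationRing_of_forall_mem_or_inv_mem fun x => Or.inl ?_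
    rw [locg_eq_top_of_asIdeal_eq_bot rfl]
    exact Subring.mem_top x
  obtain ⟨q, hqY, hMq⟩ := exists_mem_le_of_isTIdeal hY.2.le hYc hM.1 hM.2.1 hMbot
  have := hY.1 q hqY
  exact Subring.valuationRing_of_le (range_le_locg q) (locg_antitone hMq)

theorem IsPvMD.isEssentialRep_setOf_isTMax (h : IsPvMD R) :
    IsEssentialRep R {q : PrimeSpectrum R | IsTMax R q.asIdeal} :=
  ⟨fun p hp => h p.asIdeal hp p.2, iInf_locg_setOf_isTMax⟩

end TIdeal

theorem isPvMD_iff_essentialRep_compact {R : Type*} [CommRing R] [IsDomain R] :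
    IsPvMD R ↔
      IsEssential R ∧ ∃ Y : Set (PrimeSpectrum R), IsEssentialRep R Y ∧ IsCompact Y :=
  ⟨fun h => ⟨⟨_, h.isEssentialRep_setOf_isTMax⟩, _, h.isEssentialRep_setOf_isTMax,
      isCompact_setOf_isTMax⟩,
    fun ⟨_, _, hY, hYc⟩ => isPvMD_of_isEssentialRep_of_isCompact hY hYc⟩
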